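/- arXiv:2012.15603 — 2 statements merged into one kernel-verified Lean document; each statement's English description precedes it below -/
import Mathlib

section
/- With the purely imaginary parameter setting, the matrix B, and the vectors ξ_1,…,ξ_n of the context, for each j = 1,…,n one has B^{j+1}·ξ_j = 0 and B^j·ξ_j ≠ 0. -/
open Complex Matrix Finset

noncomputable section

/-- Index type for `(n+1)×(n+1)` matrices: a `1`-block plus an `n`-block. -/
abbrev Idx (n : ℕ) := Fin 1 ⊕ Fin n

/-- `ζ = 2·Im(λ0)/(n+1)`. -/
def zeta (n : ℕ) (l0 : ℂ) : ℝ := 2 * l0.im / (n + 1)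

/-- `ω_j = jπ/(n+1)`. -/
def om (n j : ℕ) : ℝ := j * Real.pi / (n + 1)

/-- `a_j = ζ·csc(ω_j)` for `j = 1,…,n` (indexed by `j : Fin n` as `j+1`). -/
def aa (n : ℕ) (l0 : ℂ) (j : Fin n) : ℝ := zeta n l0 / Real.sin (om n ((j : ℕ) + 1))

/-- `b_j = ζ·cot(ω_j) − 2·Re(λ0)` for `j = 1,…,n`. -/
def bb (n : ℕ) (l0 : ℂ) (j : Fin n) : ℝ :=
  zeta n l0 * (Real.cos (om n ((j : ℕ) + 1)) / Real.sin (om n ((j : ℕ) + 1))) - 2 * l0.re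

/-- `z0 = 2·Re(λ0) + i·ζ`. -/
def zz0 (n : ℕ) (l0 : ℂ) : ℂ := 2 * l0.re + Complex.I * zeta n l0

/-- The `(n+1)×(n+1)` matrix `B` with `(1,1)` entry `i·n·ζ`, first row/column entries `a_j`,
diagonal entries `−(z0 + b_j)` and all other entries `0`. -/
def Bmat (n : ℕ) (l0 : ℂ) : Matrix (Idx n) (Idx n) ℂ :=
  Matrix.fromBlocks
    (Matrix.of fun _ _ => Complex.I * n * zeta n l0)
    (Matrix.of fun _ j => (aa n l0 j : ℂ))
    (Matrix.of fun i _ => (aa n l0 i : ℂ))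
    (Matrix.diagonal fun j => -(zz0 n l0 + (bb n l0 j : ℂ)))

/-- The vector `ξ_m = (0, a_1/(iζ+b_1)^{m+1}, …, a_n/(iζ+b_n)^{m+1})ᵀ`. -/
def xiv (n : ℕ) (l0 : ℂ) (m : ℕ) : Idx n → ℂ :=
  Sum.elim (fun _ => 0)
    (fun k : Fin n => (aa n l0 k : ℂ) / (Complex.I * zeta n l0 + (bb n l0 k : ℂ)) ^ (m + 1))

/-! With `Re λ0 = 0`, `B` is the arrowhead matrix with head `inζ`, arms `a_k` and diagonal
`-c_k`, where `c_k = iζ + b_k`, and `ξ_m = (0, a_k / c_k^(m+1))`. Writing `S_p = Σ a_k² / c_k^p`,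
one computes `B ξ_(m+1) = S_(m+2) e₀ - ξ_m` and `B (e₀ + ξ_0) = (inζ + S_1) e₀`, so `ξ_j` heads a
Jordan chain ending in `e₀ + ξ_0` as soon as `S_1 = -inζ`, `S_2 = -1` and `S_p = 0` for
`3 ≤ p ≤ n + 1`.

These sums come from the polar forms `c_k = a_k e^{iω_k}` and `d_k := b_k - iζ = a_k e^{-iω_k}`.
First `a_k² = c_k d_k`, so `S_1 = Σ (b_k - iζ)`, and `Σ b_k = 0` by the symmetry `ω ↦ π - ω`.
Next, `u_k = d_k / c_k = e^{-2iω_k}` runs over the nontrivial `(n+1)`-st roots of unity and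
`c_k - d_k = 2iζ`, so `a_k² / c_k^(m+2) = u_k (1 - u_k)^m / (2iζ)^m`. Summing a polynomial of
degree `≤ n` over all `(n+1)`-st roots of unity gives `n + 1` times its constant term, here `0`,
so `S_(m+2)` is minus the value at the omitted root `u = 1`, i.e. `-0^m / (2iζ)^m`.
-/

section Arrowhead

variable {K ι : Type*} [Field K] [Fintype ι] [DecidableEq ι]

def arrowhead (α : K) (a c : ι → K) : Matrix (Fin 1 ⊕ ι) (Fin 1 ⊕ ι) K :=
  fromBlocks (of fun _ _ => α) (of fun _ j => a j) (of fun i _ => a i) (diagonal fun j => -c j)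

def chainVec (a c : ι → K) (m : ℕ) : Fin 1 ⊕ ι → K :=
  Sum.elim (fun _ => 0) fun k => a k / c k ^ (m + 1)

def kerVec (a c : ι → K) : Fin 1 ⊕ ι → K :=
  Sum.elim (fun _ => 1) fun k => a k / c k

variable {α : K} {a c : ι → K}

theorem arrowhead_mulVec_chainVec_succ (hc : ∀ k, c k ≠ 0) (m : ℕ) :
    arrowhead α a c *ᵥ chainVec a c (m + 1) =
      Sum.elim (fun _ => ∑ k, a k ^ 2 / c k ^ (m + 2)) 0 - chainVec a c m := by
  ext (i | k)
  · simp [arrowhead, chainVec, mulVec, dotProduct, sq, mul_div_assoc]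
  · have hdiag : c k * (a k / c k ^ (m + 1 + 1)) = a k / c k ^ (m + 1) := by
      have := hc k
      field_simp
      ring
    simp [arrowhead, chainVec, mulVec, dotProduct, diagonal_apply, hdiag]

theorem arrowhead_mulVec_kerVec (hc : ∀ k, c k ≠ 0) :
    arrowhead α a c *ᵥ kerVec a c = Sum.elim (fun _ => α + ∑ k, a k ^ 2 / c k) 0 := by
  ext (i | k)
  · simp [arrowhead, kerVec, mulVec, dotProduct, sq, mul_div_assoc]
  · simp [arrowhead, kerVec, mulVec, dotProduct, diagonal_apply, mul_div_cancel₀ _ (hc k)]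

theorem arrowhead_pow_succ_mulVec_chainVec_succ (hc : ∀ k, c k ≠ 0)
    (h2 : ∑ k, a k ^ 2 / c k ^ 2 = -1)
    {j : ℕ} (hm : ∀ m, 1 ≤ m → m ≤ j → ∑ k, a k ^ 2 / c k ^ (m + 2) = 0) :
    arrowhead α a c ^ (j + 1) *ᵥ chainVec a c (j + 1) = (-1 : K) ^ (j + 1) • kerVec a c := by
  induction j with
  | zero =>
    rw [zero_add, pow_one, arrowhead_mulVec_chainVec_succ hc, h2]
    ext (i | k) <;> simp [chainVec, kerVec]
  | succ j ih =>
    rw [pow_succ, ← mulVec_mulVec, arrowhead_mulVec_chainVec_succ hc,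
      hm (j + 1) le_add_self le_rfl, ← Pi.zero_def, Sum.elim_zero_zero, zero_sub, mulVec_neg,
      ih fun m h1 h2 => hm m h1 (by omega), pow_succ (-1 : K) (j + 1), mul_neg_one, neg_smul]

theorem arrowhead_pow_mulVec_chainVec_eq_zero_and_ne_zero (hc : ∀ k, c k ≠ 0)
    (h1 : ∑ k, a k ^ 2 / c k = -α) (h2 : ∑ k, a k ^ 2 / c k ^ 2 = -1) {j : ℕ} (hj : 1 ≤ j)
    (hm : ∀ m, 1 ≤ m → m < j → ∑ k, a k ^ 2 / c k ^ (m + 2) = 0) :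
    arrowhead α a c ^ (j + 1) *ᵥ chainVec a c j = 0 ∧
      arrowhead α a c ^ j *ᵥ chainVec a c j ≠ 0 := by
  obtain ⟨i, rfl⟩ : ∃ i, j = i + 1 := ⟨j - 1, by omega⟩
  have hchain := arrowhead_pow_succ_mulVec_chainVec_succ (α := α) (j := i) hc h2
    fun m hm1 hmi => hm m hm1 (by omega)
  have hker : arrowhead α a c *ᵥ kerVec a c = 0 := by
    rw [arrowhead_mulVec_kerVec hc, h1, add_neg_cancel]
    ext (i | k) <;> rfl
  refine ⟨by rw [pow_succ', ← mulVec_mulVec, hchain, mulVec_smul, hker, smul_zero], ?_⟩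
  rw [hchain]
  intro h
  simpa [kerVec] using congrFun h (Sum.inl 0)

end Arrowhead

open Polynomial in
theorem IsPrimitiveRoot.sum_eval_pow {R : Type*} [CommRing R] [IsDomain R] {ρ : R} {N : ℕ}
    (h : IsPrimitiveRoot ρ N) {p : R[X]} (hp : p.natDegree < N) :
    ∑ k ∈ range N, p.eval (ρ ^ k) = N * p.coeff 0 := by
  have hgeom : ∀ i ∈ range N,
      ∑ k ∈ range N, (ρ ^ i) ^ k = if i = 0 then (N : R) else 0 := by
    intro i hi
    split_ifs with h0
    · simp [h0]
    · have hne : ρ ^ i - 1 ≠ 0 := sub_ne_zero.2 (h.pow_ne_one_of_pos_of_lt h0 (mem_range.1 hi))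
      have hmul := geom_sum_mul (ρ ^ i) N
      rw [← pow_mul, mul_comm i N, pow_mul, h.pow_eq_one, one_pow, sub_self] at hmul
      exact (mul_eq_zero.1 hmul).resolve_right hne
  calc ∑ k ∈ range N, p.eval (ρ ^ k)
      = ∑ i ∈ range N, p.coeff i * ∑ k ∈ range N, (ρ ^ i) ^ k := by
        rw [sum_congr rfl fun k _ => eval_eq_sum_range' hp _, sum_comm]
        refine sum_congr rfl fun i _ => ?_
        rw [mul_sum]
        refine sum_congr rfl fun k _ => ?_
        rw [← pow_mul, ← pow_mul, mul_comm k]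
    _ = N * p.coeff 0 := by
        rw [sum_congr rfl fun i hi => congrArg _ (hgeom i hi)]
        simp [(Nat.zero_le _).trans_lt hp, mul_comm]

open Polynomial in
theorem IsPrimitiveRoot.sum_fin_eval_pow_succ {R : Type*} [CommRing R] [IsDomain R] {ρ : R}
    {n : ℕ} (h : IsPrimitiveRoot ρ (n + 1)) {p : R[X]} (hp : p.natDegree ≤ n) :
    ∑ k : Fin n, p.eval (ρ ^ ((k : ℕ) + 1)) = (n + 1) * p.coeff 0 - p.eval 1 := by
  have := h.sum_eval_pow (Nat.lt_succ_of_le hp)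
  rw [← Fin.sum_univ_eq_sum_range, Fin.sum_univ_succ] at this
  push_cast at this
  simp only [Fin.val_zero, pow_zero, Fin.val_succ] at this
  linear_combination this

theorem sq_div_pow_add_two_eq {K : Type*} [Field K] {a c d : K} (hc : c ≠ 0) (hcd : c ≠ d)
    (had : a ^ 2 = c * d) (m : ℕ) :
    a ^ 2 / c ^ (m + 2) = d / c * (1 - d / c) ^ m / (c - d) ^ m := by
  have : c - d ≠ 0 := sub_ne_zero.2 hcd
  rw [had, one_sub_div hc, div_pow]
  field_simp
  ring

theorem ofReal_mul_cot_add_I_mul (ζ ω : ℝ) (hs : Real.sin ω ≠ 0) :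
    I * ζ + ((ζ * (Real.cos ω / Real.sin ω) : ℝ) : ℂ) =
      ((ζ / Real.sin ω : ℝ) : ℂ) * exp (ω * I) := by
  have : Complex.sin ω ≠ 0 := mod_cast hs
  rw [exp_mul_I]
  push_cast
  field_simp
  ring

theorem ofReal_mul_cot_sub_I_mul (ζ ω : ℝ) (hs : Real.sin ω ≠ 0) :
    ((ζ * (Real.cos ω / Real.sin ω) : ℝ) : ℂ) - I * ζ =
      ((ζ / Real.sin ω : ℝ) : ℂ) * exp (-(ω * I)) := by
  have : Complex.sin ω ≠ 0 := mod_cast hs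
  rw [← neg_mul, exp_mul_I, Complex.cos_neg, Complex.sin_neg]
  push_cast
  field_simp
  ring

theorem sin_om_succ_ne_zero {n : ℕ} (k : Fin n) : Real.sin (om n (k + 1)) ≠ 0 := by
  refine (Real.sin_pos_of_pos_of_lt_pi (by unfold om; positivity) ?_).ne'
  rw [om, div_lt_iff₀ (by positivity), mul_comm]
  gcongr
  exact_mod_cast Nat.succ_lt_succ k.isLt

theorem om_rev_succ {n : ℕ} (k : Fin n) : om n (k.rev + 1) = Real.pi - om n (k + 1) := by
  have : (k : ℕ) < n := k.isLt
  rw [om, om, Fin.val_rev, show n - (k + 1) + 1 = n - k by omega, Nat.cast_sub this.le]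
  field_simp
  push_cast
  ring

theorem sum_cot_om_succ (n : ℕ) :
    ∑ k : Fin n, Real.cos (om n (k + 1)) / Real.sin (om n (k + 1)) = 0 := by
  have h := Equiv.sum_comp Fin.revPerm fun k : Fin n =>
    Real.cos (om n (k + 1)) / Real.sin (om n (k + 1))
  simp only [Fin.revPerm_apply, om_rev_succ, Real.cos_pi_sub, Real.sin_pi_sub, neg_div,
    sum_neg_distrib] at h
  linarith

def cc (n : ℕ) (l0 : ℂ) (k : Fin n) : ℂ := Complex.I * zeta n l0 + (bb n l0 k : ℂ)

section PurelyImaginary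

variable {n : ℕ} {l0 : ℂ}

theorem zeta_ne_zero (him : l0.im ≠ 0) : zeta n l0 ≠ 0 :=
  div_ne_zero (mul_ne_zero two_ne_zero him) (by positivity)

theorem cc_ne_zero (him : l0.im ≠ 0) (k : Fin n) : cc n l0 k ≠ 0 := by
  intro h
  have := congrArg Complex.im h
  simp [cc, zeta_ne_zero him] at this

theorem Bmat_eq_arrowhead (hre : l0.re = 0) :
    Bmat n l0 = arrowhead (I * n * zeta n l0) (fun k => (aa n l0 k : ℂ)) (cc n l0) := by
  simp [Bmat, arrowhead, cc, zz0, hre]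

theorem bb_of_re_eq_zero (hre : l0.re = 0) (k : Fin n) :
    bb n l0 k = zeta n l0 * (Real.cos (om n (k + 1)) / Real.sin (om n (k + 1))) := by
  simp [bb, hre]

theorem cc_eq_aa_mul_exp (hre : l0.re = 0) (k : Fin n) :
    cc n l0 k = aa n l0 k * exp (om n (k + 1) * I) := by
  rw [cc, bb_of_re_eq_zero hre]
  exact ofReal_mul_cot_add_I_mul _ _ (sin_om_succ_ne_zero k)

theorem bb_sub_eq_aa_mul_exp (hre : l0.re = 0) (k : Fin n) :
    bb n l0 k - I * zeta n l0 = aa n l0 k * exp (-(om n (k + 1) * I)) := by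
  rw [bb_of_re_eq_zero hre]
  exact ofReal_mul_cot_sub_I_mul _ _ (sin_om_succ_ne_zero k)

theorem aa_sq_eq (hre : l0.re = 0) (k : Fin n) :
    (aa n l0 k : ℂ) ^ 2 = cc n l0 k * (bb n l0 k - I * zeta n l0) := by
  rw [cc_eq_aa_mul_exp hre, bb_sub_eq_aa_mul_exp hre, mul_mul_mul_comm, ← exp_add,
    add_neg_cancel, exp_zero, mul_one, sq]

theorem sum_aa_sq_div_cc (hre : l0.re = 0) (him : l0.im ≠ 0) :
    ∑ k, (aa n l0 k : ℂ) ^ 2 / cc n l0 k = -(I * n * zeta n l0) := by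
  have hsum : ∑ k, (bb n l0 k : ℂ) = 0 := by
    simp_rw [← ofReal_sum, bb_of_re_eq_zero hre]
    rw [← mul_sum, sum_cot_om_succ, mul_zero, ofReal_zero]
  simp_rw [aa_sq_eq hre, mul_div_cancel_left₀ _ (cc_ne_zero him _), sum_sub_distrib, hsum]
  simp only [sum_const, card_univ, Fintype.card_fin, nsmul_eq_mul, zero_sub, neg_inj]
  ring

theorem div_cc_eq_pow (hre : l0.re = 0) (him : l0.im ≠ 0) (k : Fin n) :
    (bb n l0 k - I * zeta n l0) / cc n l0 k =
      (exp (2 * Real.pi * I / (n + 1 : ℕ)))⁻¹ ^ ((k : ℕ) + 1) := by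
  have ha : (aa n l0 k : ℂ) ≠ 0 :=
    left_ne_zero_of_mul (cc_eq_aa_mul_exp hre k ▸ cc_ne_zero him k)
  rw [bb_sub_eq_aa_mul_exp hre, cc_eq_aa_mul_exp hre, mul_div_mul_left _ _ ha, ← exp_sub,
    inv_pow, ← exp_nat_mul, ← exp_neg]
  congr 1
  push_cast [om]
  field_simp
  ring

open Polynomial in
theorem sum_aa_sq_div_cc_pow (hre : l0.re = 0) (him : l0.im ≠ 0) {m : ℕ} (hm : m + 1 ≤ n) :
    ∑ k, (aa n l0 k : ℂ) ^ 2 / cc n l0 k ^ (m + 2) =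
      -(0 : ℂ) ^ m / (2 * I * zeta n l0) ^ m := by
  have hρ := (isPrimitiveRoot_exp (n + 1) n.succ_ne_zero).inv
  have hterm : ∀ k, (aa n l0 k : ℂ) ^ 2 / cc n l0 k ^ (m + 2) =
      (X * (1 - X) ^ m : ℂ[X]).eval ((exp (2 * Real.pi * I / (n + 1 : ℕ)))⁻¹ ^ ((k : ℕ) + 1)) /
        (2 * I * zeta n l0) ^ m := by
    intro k
    have hcd : cc n l0 k - (bb n l0 k - I * zeta n l0) = 2 * I * zeta n l0 := by rw [cc]; ring
    have hcd0 : (2 * I * zeta n l0 : ℂ) ≠ 0 := by simp [zeta_ne_zero him]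
    rw [sq_div_pow_add_two_eq (cc_ne_zero him k) (sub_ne_zero.1 (hcd ▸ hcd0)) (aa_sq_eq hre k),
      hcd, div_cc_eq_pow hre him k]
    simp
  rw [sum_congr rfl fun k _ => hterm k, ← sum_div,
    hρ.sum_fin_eval_pow_succ (by compute_degree!; omega)]
  simp [coeff_zero_eq_eval_zero]

end PurelyImaginary

theorem stmt8_general (n : ℕ) (l0 : ℂ) (hre : l0.re = 0) (him : l0.im ≠ 0) :
    ∀ j : ℕ, 1 ≤ j → j ≤ n →
      ((Bmat n l0) ^ (j + 1)).mulVec (xiv n l0 j) = 0 ∧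
      ((Bmat n l0) ^ j).mulVec (xiv n l0 j) ≠ 0 := by
  intro j hj hjn
  rw [Bmat_eq_arrowhead hre]
  refine arrowhead_pow_mulVec_chainVec_eq_zero_and_ne_zero (cc_ne_zero him)
    (sum_aa_sq_div_cc hre him) ?_ hj fun m hm hmj => ?_
  · simpa using sum_aa_sq_div_cc_pow hre him (m := 0) (by omega)
  · simpa [zero_pow (by omega : m ≠ 0)] using
      sum_aa_sq_div_cc_pow hre him (by omega : m + 1 ≤ n)

/-- with the purely imaginary parameter setting, for each `j = 1,…,n`,
`B^{j+1}·ξ_j = 0` and `B^j·ξ_j ≠ 0`. -/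
theorem stmt8 (n : ℕ) (hn : 1 ≤ n) (l0 : ℂ) (hre : l0.re = 0) (him : l0.im ≠ 0) :
    ∀ j : ℕ, 1 ≤ j → j ≤ n →
      ((Bmat n l0) ^ (j + 1)).mulVec (xiv n l0 j) = 0 ∧
      ((Bmat n l0) ^ j).mulVec (xiv n l0 j) ≠ 0 :=
  stmt8_general n l0 hre him

end
end

section
/- With the first-order rogue wave construction of the context (λ0 purely imaginary with Im(λ0) > 0, so ζ > 0 and every a_j > 0), for each fixed j ∈ {1,…,n} the value 1 + (n+1)·sin(ω_j) is the greatest element of the set of values |q_j^{[1]}(x,t)| / a_j, where β ranges over all vectors of ℂ^{n+1} linearly independent from ξ_0 and (x,t) ranges over ℝ². Moreover this greatest value is attained at β = η_j (the vector of ℂ^{n+1} with first entry 1, (j+1)-th entry i, and all other entries 0) and (x,t) = (0,0). -/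
open Complex Matrix Finset

noncomputable section

/-- The vector `ξ_0 = (1, a_1/(z0+b_1), …, a_n/(z0+b_n))ᵀ`. -/
def xi0 (n : ℕ) (l0 : ℂ) : Idx n → ℂ :=
  Sum.elim (fun _ => 1)
    (fun k : Fin n => (aa n l0 k : ℂ) / (zz0 n l0 + (bb n l0 k : ℂ)))

/-- The matrix polynomial
`A(x,t) = Σ_{s=0}^{n} Σ_{k=0}^{⌊n/2⌋} (i^{s+k}/(2^k s! k!)) B^{s+2k} (x+z0 t)^s t^k`. -/
def Amat (n : ℕ) (l0 : ℂ) (x t : ℝ) : Matrix (Idx n) (Idx n) ℂ :=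
  ∑ s ∈ Finset.range (n + 1), ∑ k ∈ Finset.range (n / 2 + 1),
    ((Complex.I ^ (s + k) * ((x : ℂ) + zz0 n l0 * (t : ℂ)) ^ s * (t : ℂ) ^ k) /
        ((2 : ℂ) ^ k * (Nat.factorial s : ℂ) * (Nat.factorial k : ℂ))) •
      (Bmat n l0) ^ (s + 2 * k)

/-- The plane-wave phase `θ_j(x,t) = b_j x − (b_j²/2 − Σ_k a_k²) t`. -/
def theta (n : ℕ) (l0 : ℂ) (j : Fin n) (x t : ℝ) : ℝ :=
  bb n l0 j * x - ((bb n l0 j) ^ 2 / 2 - ∑ k, (aa n l0 k) ^ 2) * t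

/-- The plane-wave background `q_j^{bg}(x,t) = a_j e^{iθ_j(x,t)}`. -/
def qbg (n : ℕ) (l0 : ℂ) (j : Fin n) (x t : ℝ) : ℂ :=
  (aa n l0 j : ℂ) * Complex.exp (Complex.I * (theta n l0 j x t : ℝ))

/-- The vector `w(x,t) = A(x,t)·β`. -/
def wvec (n : ℕ) (l0 : ℂ) (β : Idx n → ℂ) (x t : ℝ) : Idx n → ℂ :=
  (Amat n l0 x t).mulVec β

/-- The first-order rogue wave
`q_j^{[1]} = q_j^{bg}·(1 − 2i(n+1)ζ w_{j+1} conj(w_1)/(a_j ‖w‖²))`. -/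
def q1 (n : ℕ) (l0 : ℂ) (β : Idx n → ℂ) (j : Fin n) (x t : ℝ) : ℂ :=
  qbg n l0 j x t *
    (1 - 2 * Complex.I * ((n : ℂ) + 1) * (zeta n l0 : ℝ) *
        wvec n l0 β x t (Sum.inr j) * (starRingEnd ℂ) (wvec n l0 β x t (Sum.inl 0)) /
      ((aa n l0 j : ℂ) * ((∑ i, Complex.normSq (wvec n l0 β x t i) : ℝ) : ℂ)))

/-- The vector `η_j` with first entry `1`, `(j+1)`-th entry `i`, other entries `0`. -/
def etaJ (n : ℕ) (j : Fin n) : Idx n → ℂ :=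
  Sum.elim (fun _ => 1) (fun k : Fin n => if k = j then Complex.I else 0)


/-!
The rogue wave is the background wave times the correction factor
`1 - K·w_{j+1}·conj w_1/‖w‖²` with `K = 2i(n+1)ζ/a_j`, and `|K| = 2(n+1) sin ω_j` because
`ζ/a_j = sin ω_j`. Since `2|w_{j+1}||w_1| ≤ ‖w‖²`, the triangle inequality bounds
`|q_j^{[1]}|/a_j` by `1 + (n+1) sin ω_j`. As `A(0,0) = 1`, at the origin `w = β`; for `β = η_j`
the ratio `w_{j+1}·conj w_1/‖w‖²` equals `i/2`, which turns the correction into the positive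
real number `1 + (n+1) sin ω_j`.
-/

lemma Amat_zero_zero (n : ℕ) (l0 : ℂ) : Amat n l0 0 0 = 1 := by
  unfold Amat
  rw [Finset.sum_eq_single 0 (fun s _ hs => Finset.sum_eq_zero fun k _ => by simp [zero_pow hs])
    (by simp)]
  rw [Finset.sum_eq_single 0 (fun k _ hk => by simp [zero_pow hk]) (by simp)]
  simp

lemma wvec_zero_zero (n : ℕ) (l0 : ℂ) (β : Idx n → ℂ) : wvec n l0 β 0 0 = β := by
  rw [wvec, Amat_zero_zero, Matrix.one_mulVec]

lemma norm_qbg {n : ℕ} {l0 : ℂ} {j : Fin n} (ha : 0 ≤ aa n l0 j) (x t : ℝ) :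
    ‖qbg n l0 j x t‖ = aa n l0 j := by
  simp [qbg, Complex.norm_exp, _root_.abs_of_nonneg ha]

lemma zeta_pos (n : ℕ) {l0 : ℂ} (him : 0 < l0.im) : 0 < zeta n l0 := by
  unfold zeta; positivity

lemma sin_om_succ_pos {n : ℕ} (j : Fin n) : 0 < Real.sin (om n ((j : ℕ) + 1)) := by
  apply Real.sin_pos_of_pos_of_lt_pi
  · unfold om; positivity
  · have hj : ((j : ℕ) + 1 : ℝ) < (n : ℝ) + 1 := by exact_mod_cast Nat.add_lt_add_right j.2 1
    unfold om
    rw [div_lt_iff₀ (by positivity)]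
    push_cast
    nlinarith [Real.pi_pos]

lemma aa_pos {n : ℕ} {l0 : ℂ} (him : 0 < l0.im) (j : Fin n) : 0 < aa n l0 j :=
  div_pos (zeta_pos n him) (sin_om_succ_pos j)

lemma zeta_div_aa {n : ℕ} {l0 : ℂ} (him : 0 < l0.im) (j : Fin n) :
    zeta n l0 / aa n l0 j = Real.sin (om n ((j : ℕ) + 1)) := by
  rw [aa, div_div_eq_mul_div, mul_div_assoc, mul_comm, div_mul_cancel₀ _ (zeta_pos n him).ne']

lemma zz0_add_bb (n : ℕ) (l0 : ℂ) (j : Fin n) :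
    zz0 n l0 + (bb n l0 j : ℂ) =
      (zeta n l0 * (Real.cos (om n ((j : ℕ) + 1)) / Real.sin (om n ((j : ℕ) + 1))) : ℝ) +
        Complex.I * zeta n l0 := by
  simp only [zz0, bb]
  push_cast
  ring

lemma linearIndependent_etaJ_xi0 {n : ℕ} {l0 : ℂ} (him : 0 < l0.im) (j : Fin n) :
    LinearIndependent ℂ ![etaJ n j, xi0 n l0] := by
  rw [linearIndependent_fin2]
  refine ⟨fun h => by simpa [xi0] using congrFun h (Sum.inl 0), fun c h => ?_⟩
  have hc : c = 1 := by simpa [xi0, etaJ] using congrFun h (Sum.inl 0)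
  have hj := congrFun h (Sum.inr j)
  simp only [Matrix.cons_val_one, Matrix.cons_val_zero, Pi.smul_apply, xi0, etaJ, hc,
    Sum.elim_inr, if_pos, one_smul] at hj
  rw [zz0_add_bb] at hj
  set r : ℝ := zeta n l0 * (Real.cos (om n ((j : ℕ) + 1)) / Real.sin (om n ((j : ℕ) + 1)))
  have hne : (r : ℂ) + Complex.I * zeta n l0 ≠ 0 := fun h0 => by
    simpa [(zeta_pos n him).ne'] using congrArg Complex.im h0
  rw [div_eq_iff hne] at hj
  -- the real part reads `a_j = -ζ`
  have hre := congrArg Complex.re hj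
  simp only [Complex.ofReal_re, Complex.mul_re, Complex.add_re, Complex.add_im, Complex.I_re,
    Complex.I_im, Complex.ofReal_im, Complex.mul_im] at hre
  linarith [aa_pos him j, zeta_pos n him]

lemma two_mul_norm_mul_norm_le_sum_normSq {ι : Type*} [Fintype ι] (w : ι → ℂ) {i k : ι}
    (hik : i ≠ k) : 2 * (‖w i‖ * ‖w k‖) ≤ ∑ l, Complex.normSq (w l) := by
  classical
  calc 2 * (‖w i‖ * ‖w k‖) ≤ ‖w i‖ ^ 2 + ‖w k‖ ^ 2 := by
        rw [← mul_assoc]; exact two_mul_le_add_sq _ _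
    _ = ∑ l ∈ {i, k}, Complex.normSq (w l) := by
        rw [Finset.sum_pair hik, Complex.sq_norm, Complex.sq_norm]
    _ ≤ ∑ l, Complex.normSq (w l) :=
        Finset.sum_le_sum_of_subset_of_nonneg (Finset.subset_univ _)
          fun l _ _ => Complex.normSq_nonneg _

lemma norm_mul_conj_div_le {u v : ℂ} {S : ℝ} (h : 2 * (‖u‖ * ‖v‖) ≤ S) :
    ‖u * (starRingEnd ℂ) v / (S : ℂ)‖ ≤ 1 / 2 := by
  rw [norm_div, norm_mul, Complex.norm_conj, Complex.norm_real, Real.norm_eq_abs]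
  rcases (mul_nonneg (norm_nonneg u) (norm_nonneg v)).eq_or_lt with h0 | h0
  · rw [← h0, zero_div]; norm_num
  · rw [div_le_iff₀ (by rw [abs_of_pos (by linarith)]; linarith), abs_of_pos (by linarith)]
    linarith

lemma q1_eq (n : ℕ) (l0 : ℂ) (β : Idx n → ℂ) (j : Fin n) (x t : ℝ) :
    q1 n l0 β j x t = qbg n l0 j x t *
      (1 - 2 * Complex.I * ((n : ℂ) + 1) * (zeta n l0 / aa n l0 j : ℝ) *
        (wvec n l0 β x t (Sum.inr j) * (starRingEnd ℂ) (wvec n l0 β x t (Sum.inl 0)) /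
          ((∑ i, Complex.normSq (wvec n l0 β x t i) : ℝ) : ℂ))) := by
  rw [q1]
  push_cast
  ring

lemma norm_q1_div_aa_le {n : ℕ} {l0 : ℂ} (him : 0 < l0.im) (β : Idx n → ℂ) (j : Fin n)
    (x t : ℝ) :
    ‖q1 n l0 β j x t‖ / aa n l0 j ≤
      1 + ((n : ℝ) + 1) * Real.sin (om n ((j : ℕ) + 1)) := by
  have ha := aa_pos him j
  have hK : ‖2 * Complex.I * ((n : ℂ) + 1) * (zeta n l0 / aa n l0 j : ℝ)‖ =
      2 * (((n : ℝ) + 1) * Real.sin (om n ((j : ℕ) + 1))) := by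
    rw [zeta_div_aa him j, show (n : ℂ) + 1 = ((n + 1 : ℝ) : ℂ) by push_cast; rfl]
    simp only [norm_mul, Complex.norm_I, Complex.norm_real, Complex.norm_two, Real.norm_eq_abs,
      abs_of_pos (sin_om_succ_pos j), abs_of_pos (show (0 : ℝ) < n + 1 by positivity)]
    ring
  have hr := norm_mul_conj_div_le <| two_mul_norm_mul_norm_le_sum_normSq (wvec n l0 β x t)
    (Sum.inr_ne_inl : (Sum.inr j : Idx n) ≠ Sum.inl 0)
  rw [q1_eq, norm_mul, norm_qbg ha.le, mul_div_cancel_left₀ _ ha.ne']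
  calc _ ≤ ‖(1 : ℂ)‖ + ‖_‖ := norm_sub_le _ _
    _ ≤ 1 + 2 * (((n : ℝ) + 1) * Real.sin (om n ((j : ℕ) + 1))) * (1 / 2) := by
        rw [norm_one, norm_mul, hK]
        gcongr
        have := sin_om_succ_pos j; positivity
    _ = _ := by ring

lemma norm_q1_etaJ_div_aa {n : ℕ} {l0 : ℂ} (him : 0 < l0.im) (j : Fin n) :
    ‖q1 n l0 (etaJ n j) j 0 0‖ / aa n l0 j =
      1 + ((n : ℝ) + 1) * Real.sin (om n ((j : ℕ) + 1)) := by
  have ha := aa_pos him j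
  have hS : ∑ i, Complex.normSq (etaJ n j i) = 2 := by
    simp [Fintype.sum_sum_type, etaJ, apply_ite Complex.normSq, Complex.normSq_I]
    norm_num
  have hfactor : 1 - 2 * Complex.I * ((n : ℂ) + 1) * (zeta n l0 / aa n l0 j : ℝ) *
      (etaJ n j (Sum.inr j) * (starRingEnd ℂ) (etaJ n j (Sum.inl 0)) / ((2 : ℝ) : ℂ)) =
      ((1 + ((n : ℝ) + 1) * Real.sin (om n ((j : ℕ) + 1)) : ℝ) : ℂ) := by
    simp only [etaJ, Sum.elim_inr, Sum.elim_inl, if_pos, map_one, zeta_div_aa him j]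
    push_cast
    ring_nf
    rw [Complex.I_sq]
    ring
  have hpos : 0 ≤ 1 + ((n : ℝ) + 1) * Real.sin (om n ((j : ℕ) + 1)) := by
    have := sin_om_succ_pos j; positivity
  rw [q1_eq, wvec_zero_zero, hS, hfactor, norm_mul, norm_qbg ha.le, Complex.norm_real,
    Real.norm_of_nonneg hpos, mul_div_cancel_left₀ _ ha.ne']

theorem stmt19_general (n : ℕ) (l0 : ℂ) (him : 0 < l0.im) :
    ∀ j : Fin n,
      IsGreatest
        {r : ℝ | ∃ (β : Idx n → ℂ) (x t : ℝ),
          LinearIndependent ℂ ![β, xi0 n l0] ∧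
          r = ‖q1 n l0 β j x t‖ / aa n l0 j}
        (1 + ((n : ℝ) + 1) * Real.sin (om n ((j : ℕ) + 1))) ∧
      LinearIndependent ℂ ![etaJ n j, xi0 n l0] ∧
      ‖q1 n l0 (etaJ n j) j 0 0‖ / aa n l0 j =
        1 + ((n : ℝ) + 1) * Real.sin (om n ((j : ℕ) + 1)) := by
  intro j
  have hLI := linearIndependent_etaJ_xi0 him j
  have hval := norm_q1_etaJ_div_aa him j
  refine ⟨⟨⟨etaJ n j, 0, 0, hLI, hval.symm⟩, ?_⟩, hLI, hval⟩
  rintro r ⟨β, x, t, -, rfl⟩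
  exact norm_q1_div_aa_le him β j x t

/-- for each component `j`, `1 + (n+1)·sin ω_j` is the greatest value of
`|q_j^{[1]}(x,t)|/a_j` over all admissible `β` and `(x,t) ∈ ℝ²`, and it is attained at
`β = η_j` and `(x,t) = (0,0)`. -/
theorem stmt19 (n : ℕ) (hn : 1 ≤ n) (l0 : ℂ) (hre : l0.re = 0) (him : 0 < l0.im) :
    ∀ j : Fin n,
      IsGreatest
        {r : ℝ | ∃ (β : Idx n → ℂ) (x t : ℝ),
          LinearIndependent ℂ ![β, xi0 n l0] ∧
          r = ‖q1 n l0 β j x t‖ / aa n l0 j}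
        (1 + ((n : ℝ) + 1) * Real.sin (om n ((j : ℕ) + 1))) ∧
      LinearIndependent ℂ ![etaJ n j, xi0 n l0] ∧
      ‖q1 n l0 (etaJ n j) j 0 0‖ / aa n l0 j =
        1 + ((n : ℝ) + 1) * Real.sin (om n ((j : ℕ) + 1)) :=
  stmt19_general n l0 him
end
end
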